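/- arXiv:2504.14339 — 2 statements merged into one kernel-verified Lean document; each statement's English description precedes it below -/
import Mathlib

section
/- Let v ≥ 2, let π be the permutation of ℤ/2^vℤ given by π(i) = i + 2, and let ρ be a permutation of ℤ/2^vℤ commuting with π such that ρ² = id and ρ(i) ≠ i for all i. Then exactly one of the following holds: (1) ρ(i) = i + 2^{v-1} for all i; or (2) there is an odd γ ∈ ℤ/2^vℤ such that ρ(i) = i + γ for all even i and ρ(i) = i - γ for all odd i. -/
private lemma aux_two_mul_eq_zero (v : ℕ) (hv : 2 ≤ v) (x : ZMod (2 ^ v))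
    (h : 2 * x = 0) : x = 0 ∨ x = (2 : ZMod (2 ^ v)) ^ (v - 1) := by
  haveI : NeZero (2 ^ v) := ⟨by positivity⟩
  have hcast : ((x.val : ℕ) : ZMod (2 ^ v)) = x := by
    simp [ZMod.natCast_val, ZMod.cast_id]
  have h2 : ((2 * x.val : ℕ) : ZMod (2 ^ v)) = 0 := by push_cast [hcast]; exact h
  have hdvd : 2 ^ v ∣ 2 * x.val := (ZMod.natCast_eq_zero_iff _ _).mp h2
  have hv1 : 2 ^ v = 2 * 2 ^ (v - 1) := by
    rw [← pow_succ']
    congr 1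
    omega
  have hdvd' : 2 ^ (v - 1) ∣ x.val := by
    rcases hdvd with ⟨c, hc⟩
    refine ⟨c, ?_⟩
    have h2 : 2 * x.val = 2 * (2 ^ (v - 1) * c) := by rw [hc, hv1]; ring
    omega
  have hlt : x.val < 2 ^ v := ZMod.val_lt x
  rcases hdvd' with ⟨c, hc⟩
  have hc2 : c = 0 ∨ c = 1 := by
    by_contra hcc
    push_neg at hcc
    have : 2 ≤ c := by omega
    nlinarith [Nat.pos_of_ne_zero (fun h0 => by simp [h0] at hc; omega : 2 ^ (v-1) ≠ 0)]
  have hval : ((2 : ZMod (2 ^ v)) ^ (v - 1)).val = 2 ^ (v - 1) := by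
    have : ((2 : ZMod (2 ^ v)) ^ (v - 1)) = ((2 ^ (v - 1) : ℕ) : ZMod (2 ^ v)) := by
      push_cast; ring
    rw [this, ZMod.val_cast_of_lt]
    omega
  rcases hc2 with rfl | rfl
  · left
    have : x.val = 0 := by omega
    rw [← hcast, this]; simp
  · right
    have hxv : x.val = 2 ^ (v - 1) := by omega
    rw [← hcast, hxv]
    have : ((2 : ZMod (2 ^ v)) ^ (v - 1)) = ((2 ^ (v - 1) : ℕ) : ZMod (2 ^ v)) := by
      push_cast; ring
    rw [this]

/-- a fixed-point-free involution of `ℤ/2^vℤ` (v ≥ 2) commuting with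
translation by 2 is either translation by `2^(v-1)`, or acts as `i ↦ i + γ` on even
elements and `i ↦ i - γ` on odd elements for some odd `γ` — and exactly one of these holds. -/
theorem centralizer_of_translation_by_two_involution
    (v : ℕ) (hv : 2 ≤ v)
    (ρ : Equiv.Perm (ZMod (2 ^ v)))
    (hcomm : ∀ i : ZMod (2 ^ v), ρ (i + 2) = ρ i + 2)
    (hinv : ∀ i : ZMod (2 ^ v), ρ (ρ i) = i)
    (hfpf : ∀ i : ZMod (2 ^ v), ρ i ≠ i) :
    Xor' (∀ i : ZMod (2 ^ v), ρ i = i + 2 ^ (v - 1))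
      (∃ γ : ZMod (2 ^ v), Odd γ.val ∧
        ∀ i : ZMod (2 ^ v), (Even i.val → ρ i = i + γ) ∧ (Odd i.val → ρ i = i - γ)) := by
  haveI : NeZero (2 ^ v) := ⟨by positivity⟩
  have hn1 : 1 < 2 ^ v := by
    calc 1 < 2 ^ 2 := by norm_num
    _ ≤ 2 ^ v := Nat.pow_le_pow_right (by norm_num) hv
  have hval_pow : ((2 : ZMod (2 ^ v)) ^ (v - 1)).val = 2 ^ (v - 1) := by
    have h : ((2 : ZMod (2 ^ v)) ^ (v - 1)) = ((2 ^ (v - 1) : ℕ) : ZMod (2 ^ v)) := by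
      push_cast; ring
    rw [h, ZMod.val_cast_of_lt]
    exact Nat.pow_lt_pow_right (by norm_num) (by omega)
  have hpow_even : Even ((2 : ZMod (2 ^ v)) ^ (v - 1)).val := by
    rw [hval_pow]
    exact (Nat.even_pow' (by omega)).mpr even_two
  -- translation lemma
  have key : ∀ (x : ZMod (2 ^ v)) (k : ℕ), ρ (x + 2 * k) = ρ x + 2 * k := by
    intro x k
    induction k with
    | zero => simp
    | succ k ih =>
      have h : (x + 2 * ((k : ZMod (2 ^ v)) + 1)) = (x + 2 * k) + 2 := by ring
      push_cast
      rw [h, hcomm, ih]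
      ring
  have hcast : ∀ x : ZMod (2 ^ v), ((x.val : ℕ) : ZMod (2 ^ v)) = x := by
    intro x; simp [ZMod.natCast_val, ZMod.cast_id]
  have heven : ∀ i : ZMod (2 ^ v), Even i.val → ρ i = ρ 0 + i := by
    intro i hi
    obtain ⟨m, hm⟩ := hi
    have hc := hcast i
    rw [hm] at hc
    push_cast at hc
    have hk := key 0 m
    rw [show (0 : ZMod (2 ^ v)) + 2 * (m : ZMod (2 ^ v)) = i by rw [← hc]; ring] at hk
    rw [hk, ← hc]; ring
  have hodd : ∀ i : ZMod (2 ^ v), Odd i.val → ρ i = ρ 1 + (i - 1) := by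
    intro i hi
    obtain ⟨m, hm⟩ := hi
    have hc := hcast i
    rw [hm] at hc
    push_cast at hc
    have hk := key 1 m
    rw [show (1 : ZMod (2 ^ v)) + 2 * (m : ZMod (2 ^ v)) = i by rw [← hc]; ring] at hk
    rw [hk, ← hc]; ring
  have hpadd : ∀ x y : ZMod (2 ^ v), (x + y).val % 2 = (x.val + y.val) % 2 := by
    intro x y
    rw [ZMod.val_add]
    exact Nat.mod_mod_of_dvd _ (dvd_pow_self 2 (by omega))
  haveI : Fact (1 < 2 ^ v) := ⟨hn1⟩
  have hval1 : (1 : ZMod (2 ^ v)).val = 1 := ZMod.val_one _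
  rcases Nat.even_or_odd (ρ 0).val with ha | ha
  · -- ρ 0 has even val : translation case
    have h0 : 2 * ρ 0 = 0 := by
      have h := heven (ρ 0) ha
      rw [hinv 0] at h
      linear_combination -h
    have h0' : ρ 0 = (2 : ZMod (2 ^ v)) ^ (v - 1) := by
      rcases aux_two_mul_eq_zero v hv _ h0 with h | h
      · exact absurd h (hfpf 0)
      · exact h
    -- ρ 1 has odd val
    have hb : Odd (ρ 1).val := by
      rcases Nat.even_or_odd (ρ 1).val with hb | hb
      · exfalso
        have h := heven (ρ 1) hb
        rw [hinv 1] at h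
        have hp := hpadd (ρ 0) (ρ 1)
        rw [← h, hval1] at hp
        rw [Nat.even_iff] at ha hb
        omega
      · exact hb
    have h1 : 2 * (ρ 1 - 1) = 0 := by
      have h := hodd (ρ 1) hb
      rw [hinv 1] at h
      linear_combination -h
    have h1' : ρ 1 = 1 + (2 : ZMod (2 ^ v)) ^ (v - 1) := by
      rcases aux_two_mul_eq_zero v hv _ h1 with h | h
      · exfalso
        apply hfpf 1
        linear_combination h
      · linear_combination h
    left
    constructor
    · intro i
      rcases Nat.even_or_odd i.val with hi | hi
      · rw [heven i hi, h0']; ring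
      · rw [hodd i hi, h1']; ring
    · rintro ⟨γ, hγodd, hγ⟩
      have h := (hγ 0).1 (by simp)
      rw [h0'] at h
      have : γ = (2 : ZMod (2 ^ v)) ^ (v - 1) := by linear_combination -h
      rw [this] at hγodd
      exact (Nat.not_odd_iff_even.mpr hpow_even) hγodd
  · -- ρ 0 has odd val : case 2
    have hb : ρ 1 = 1 - ρ 0 := by
      have h := hodd (ρ 0) ha
      rw [hinv 0] at h
      linear_combination -h
    right
    constructor
    · refine ⟨ρ 0, ha, fun i => ⟨fun hi => ?_, fun hi => ?_⟩⟩
      · rw [heven i hi]; ring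
      · rw [hodd i hi, hb]; ring
    · intro h
      have h0 := h 0
      rw [zero_add] at h0
      rw [h0] at ha
      exact (Nat.not_odd_iff_even.mpr hpow_even) ha
end

section
/- Let B be a brace and a, b ∈ B. If a commutes (in the multiplicative group B°) with every element of the additive cyclic subgroup ⟨b⟩₊, and b commutes with every element of ⟨a⟩₊, then every element of ⟨a⟩₊ commutes with every element of ⟨b⟩₊. In fact ma ∘ nb = (m - mn)a + (n - mn)b + mn(b∘a) for all integers m, n. -/
/-! The map `λ_x : z ↦ x ∘ z - x` is additive, so `x ∘ (n • y) = x + n • λ_x(y)`. Applying this twice,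
and using that `b` commutes with `m • a` to rewrite `(m • a) ∘ b` as `b ∘ (m • a)`, expresses
`(m • a) ∘ (n • b)` through `a`, `b` and `b ∘ a` alone. The resulting formula is symmetric in `a`
and `b` once `a ∘ b = b ∘ a`, which gives the commutation. -/

section LeftBrace

variable {B : Type*} [AddCommGroup B] [Mul B]

theorem mul_zero_eq_self_of_brace (hbrace : ∀ a b c : B, a * (b + c) = a * b - a + a * c)
    (x : B) : x * 0 = x := by
  have h := hbrace x 0 0
  rw [add_zero] at h
  linear_combination (norm := abel_nf) -h

def braceLambda (hbrace : ∀ a b c : B, a * (b + c) = a * b - a + a * c) (x : B) :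
    B →+ B where
  toFun z := x * z - x
  map_zero' := by simp only [mul_zero_eq_self_of_brace hbrace, sub_self]
  map_add' u v := by simp only [hbrace]; abel

theorem mul_zsmul_of_brace (hbrace : ∀ a b c : B, a * (b + c) = a * b - a + a * c)
    (x y : B) (n : ℤ) :
    x * (n • y) = x + n • (x * y - x) := by
  have h : braceLambda hbrace x (n • y) = n • braceLambda hbrace x y := map_zsmul _ n y
  simp only [braceLambda, AddMonoidHom.coe_mk, ZeroHom.coe_mk] at h
  rw [← h]
  abel

theorem zsmul_mul_zsmul_of_brace (hbrace : ∀ a b c : B, a * (b + c) = a * b - a + a * c)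
    {a b : B} (hb : ∀ m : ℤ, b * (m • a) = (m • a) * b) (m n : ℤ) :
    (m • a) * (n • b) = (m - m * n) • a + (n - m * n) • b + (m * n) • (b * a) := by
  have hmb : (m • a) * b = b + m • (b * a - b) := by
    rw [← hb m, mul_zsmul_of_brace hbrace]
  rw [mul_zsmul_of_brace hbrace, hmb]
  simp only [smul_sub, smul_add, sub_smul, mul_smul, mul_comm m n]
  abel

end LeftBrace

/-- in a brace, if `a` commutes multiplicatively with every element of `⟨b⟩₊`
and `b` commutes with every element of `⟨a⟩₊`, then
`ma ∘ nb = (m - mn)a + (n - mn)b + mn(b∘a)` and `⟨a⟩₊` centralizes `⟨b⟩₊`. -/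
theorem commutativity_of_cyclic_subbraces
    (B : Type*) [AddCommGroup B] [Group B]
    (hbrace : ∀ a b c : B, a * (b + c) = a * b - a + a * c)
    (a b : B)
    (ha : ∀ n : ℤ, a * (n • b) = (n • b) * a)
    (hb : ∀ m : ℤ, b * (m • a) = (m • a) * b) :
    (∀ m n : ℤ, (m • a) * (n • b) =
        (m - m * n) • a + (n - m * n) • b + (m * n) • (b * a)) ∧
    (∀ m n : ℤ, (m • a) * (n • b) = (n • b) * (m • a)) := by
  have hab : a * b = b * a := by simpa using ha 1
  refine ⟨zsmul_mul_zsmul_of_brace hbrace hb, fun m n => ?_⟩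
  rw [zsmul_mul_zsmul_of_brace hbrace hb, zsmul_mul_zsmul_of_brace hbrace ha, hab, mul_comm n m]
  abel
end
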